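/- arXiv:2206.06468 — 5 statements merged into one kernel-verified Lean document; each statement's English description precedes it below -/
import Mathlib

section
/- If α + β ≠ 0, then for all natural numbers t, M^t = (1/(α+β)) · [[β + α·r^t, α - α·r^t],[β - β·r^t, α + β·r^t]], where r = 1-αγ-βγ. -/
/-! `M` is `P + r • (1 - P)` for the idempotent `P` whose rows are the stationary distribution
`(β, α) / (α + β)`; since `P` and `1 - P` are complementary idempotents, `M ^ t = P + r ^ t • (1 - P)`. -/

theorem IsIdempotentElem.pow_add_smul_one_sub {R A : Type*} [CommRing R] [Ring A] [Algebra R A]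
    {P : A} (hP : IsIdempotentElem P) (r : R) (t : ℕ) :
    (P + r • (1 - P)) ^ t = P + r ^ t • (1 - P) := by
  induction t with
  | zero => simp
  | succ t ih =>
    rw [pow_succ, ih]
    simp only [add_mul, mul_add, mul_smul_comm, smul_mul_assoc, hP.eq, hP.one_sub.eq,
      hP.mul_one_sub_self, hP.one_sub_mul_self, smul_zero, add_zero, zero_add, smul_smul, pow_succ,
      mul_comm r]

namespace TwoState

variable {K : Type*} [Field K] (α β : K)

def stationaryProj : Matrix (Fin 2) (Fin 2) K :=
  (α + β)⁻¹ • !![β, α; β, α]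

variable {α β}

theorem isIdempotentElem_stationaryProj (hab : α + β ≠ 0) :
    IsIdempotentElem (stationaryProj α β) := by
  unfold IsIdempotentElem stationaryProj
  ext i j
  fin_cases i <;> fin_cases j <;>
    · simp [Matrix.mul_apply, Fin.sum_univ_two]
      field_simp
      ring

theorem stationaryProj_add_smul_one_sub (hab : α + β ≠ 0) (s : K) :
    stationaryProj α β + s • (1 - stationaryProj α β) =
      (α + β)⁻¹ • !![β + α * s, α - α * s; β - β * s, α + β * s] := by
  unfold stationaryProj
  ext i j
  fin_cases i <;> fin_cases j <;>
    · simp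
      field_simp
      ring

theorem transitionMatrix_eq_stationaryProj_add_smul (hab : α + β ≠ 0) (γ : K) :
    !![1 - α * γ, α * γ; β * γ, 1 - β * γ] =
      stationaryProj α β + (1 - α * γ - β * γ) • (1 - stationaryProj α β) := by
  rw [stationaryProj_add_smul_one_sub hab]
  ext i j
  fin_cases i <;> fin_cases j <;>
    · simp
      field_simp
      ring

end TwoState

open TwoState in
theorem stmt_6 (α β γ : ℝ) (hab : α + β ≠ 0) (r : ℝ) (hr : r = 1 - α * γ - β * γ) :
    ∀ t : ℕ, (!![1 - α * γ, α * γ; β * γ, 1 - β * γ] : Matrix (Fin 2) (Fin 2) ℝ) ^ t =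
      (α + β)⁻¹ • !![β + α * r ^ t, α - α * r ^ t; β - β * r ^ t, α + β * r ^ t] := by
  intro t
  rw [transitionMatrix_eq_stationaryProj_add_smul hab, ← hr,
    (isIdempotentElem_stationaryProj hab).pow_add_smul_one_sub, stationaryProj_add_smul_one_sub hab]
end

section
/- If |1-αγ-βγ| < 1 and α + β ≠ 0, then M^t converges as t → ∞ to the matrix (1/(α+β))·[[β, α],[β, α]]. -/
/-!
The rows of `!![β, α; β, α]` are left eigenvectors of `M` for the eigenvalue `1`, those of
`!![α, -α; -β, β]` for the eigenvalue `r = 1 - αγ - βγ`. Scaled by `(α + β)⁻¹` the two matrices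
become `P` and `Q` with `P + Q = 1`, so `M ^ t = P + r ^ t • Q`, and `r ^ t → 0`.
-/

open Filter Topology

section PowDecomposition

variable {𝕜 R : Type*} [CommRing 𝕜] [Ring R] [Module 𝕜 R] [IsScalarTower 𝕜 R R]

theorem pow_eq_add_pow_smul_of_mul_eq {M P Q : R} {r : 𝕜} (hPQ : P + Q = 1) (hP : P * M = P)
    (hQ : Q * M = r • Q) (t : ℕ) : M ^ t = P + r ^ t • Q := by
  induction t with
  | zero => simp [hPQ]
  | succ t ih => rw [pow_succ, ih, add_mul, smul_mul_assoc, hP, hQ, smul_smul, pow_succ]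

end PowDecomposition

theorem tendsto_pow_of_mul_eq {𝕜 R : Type*} [NormedField 𝕜] [Ring R] [Module 𝕜 R]
    [IsScalarTower 𝕜 R R] [TopologicalSpace R] [ContinuousAdd R] [ContinuousSMul 𝕜 R]
    {M P Q : R} {r : 𝕜} (hr : ‖r‖ < 1) (hPQ : P + Q = 1) (hP : P * M = P)
    (hQ : Q * M = r • Q) : Tendsto (fun t : ℕ => M ^ t) atTop (𝓝 P) := by
  have hrt : Tendsto (fun t : ℕ => r ^ t) atTop (𝓝 0) :=
    tendsto_pow_atTop_nhds_zero_of_norm_lt_one hr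
  simpa [pow_eq_add_pow_smul_of_mul_eq hPQ hP hQ] using (hrt.smul_const Q).const_add P

section TwoState

variable (α β γ : ℝ)

theorem stationary_mul_twoState :
    !![β, α; β, α] * !![1 - α * γ, α * γ; β * γ, 1 - β * γ] = !![β, α; β, α] := by
  ext i j
  fin_cases i <;> fin_cases j <;> simp [Matrix.mul_apply] <;> ring

theorem transient_mul_twoState :
    !![α, -α; -β, β] * !![1 - α * γ, α * γ; β * γ, 1 - β * γ] =
      (1 - α * γ - β * γ) • !![α, -α; -β, β] := by
  ext i j
  fin_cases i <;> fin_cases j <;> simp [Matrix.mul_apply] <;> ring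

theorem stationary_add_transient_twoState :
    (!![β, α; β, α] + !![α, -α; -β, β] : Matrix (Fin 2) (Fin 2) ℝ) = (α + β) • 1 := by
  ext i j
  fin_cases i <;> fin_cases j <;> simp [add_comm]

end TwoState

theorem stmt_7 (α β γ : ℝ) (hab : α + β ≠ 0) (hr : |1 - α * γ - β * γ| < 1) :
    Filter.Tendsto
      (fun t : ℕ => (!![1 - α * γ, α * γ; β * γ, 1 - β * γ] : Matrix (Fin 2) (Fin 2) ℝ) ^ t)
      Filter.atTop (nhds ((α + β)⁻¹ • !![β, α; β, α])) := by
  set c := (α + β)⁻¹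
  refine tendsto_pow_of_mul_eq (Q := c • !![α, -α; -β, β]) (by rwa [Real.norm_eq_abs]) ?_ ?_ ?_
  · rw [← smul_add, stationary_add_transient_twoState, smul_smul, inv_mul_cancel₀ hab, one_smul]
  · rw [smul_mul_assoc, stationary_mul_twoState]
  · rw [smul_mul_assoc, transient_mul_twoState, smul_comm]
end

section
/- If |1-αγ-βγ| < 1 and α + β ≠ 0, then for any initial state (A₀, B₀), the sequence defined by (A(t+1), B(t+1)) = (A(t)(1-αγ)+αγB(t), B(t)(1-βγ)+βγA(t)) with (A(0),B(0)) = (A₀,B₀) satisfies: both A(t) and B(t) converge to (βA₀ + αB₀)/(α+β). -/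
/-! The weighted sum `β * A t + α * B t` is conserved by the recurrence, while the gap
`A t - B t` is multiplied by `r = 1 - α * γ - β * γ` at each step and hence tends to `0`
when `|r| < 1`. A pair of sequences with a conserved weighted sum and vanishing gap
converges to the weighted mean `(β * A 0 + α * B 0) / (α + β)`. -/

open Filter Topology

theorem tendsto_of_weighted_sum_eq_of_tendsto_sub {α β C : ℝ} (hab : α + β ≠ 0)
    {A B : ℕ → ℝ} (hsum : ∀ t, β * A t + α * B t = C)
    (hgap : Tendsto (fun t => A t - B t) atTop (𝓝 0)) :
    Tendsto A atTop (𝓝 (C / (α + β))) ∧ Tendsto B atTop (𝓝 (C / (α + β))) := by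
  have hA : ∀ t, A t = (C + α * (A t - B t)) / (α + β) := fun t => by
    rw [← hsum t]; field_simp; ring
  have hB : ∀ t, B t = (C - β * (A t - B t)) / (α + β) := fun t => by
    rw [← hsum t]; field_simp; ring
  constructor
  · refine Tendsto.congr (fun t => (hA t).symm) ?_
    simpa using ((hgap.const_mul α).const_add C).div_const (α + β)
  · refine Tendsto.congr (fun t => (hB t).symm) ?_
    simpa using ((hgap.const_mul β).const_sub C).div_const (α + β)

section Consensus

variable {α β γ : ℝ} {A B : ℕ → ℝ}
  (hA : ∀ t, A (t + 1) = A t * (1 - α * γ) + α * γ * B t)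
  (hB : ∀ t, B (t + 1) = B t * (1 - β * γ) + β * γ * A t)
include hA hB

theorem weighted_sum_eq_of_recurrence (t : ℕ) : β * A t + α * B t = β * A 0 + α * B 0 := by
  induction t with
  | zero => rfl
  | succ n ih => rw [hA, hB, ← ih]; ring

theorem sub_eq_pow_mul_of_recurrence (t : ℕ) :
    A t - B t = (1 - α * γ - β * γ) ^ t * (A 0 - B 0) := by
  induction t with
  | zero => simp
  | succ n ih => rw [pow_succ', mul_assoc, ← ih, hA, hB]; ring

theorem tendsto_sub_zero_of_recurrence (hr : |1 - α * γ - β * γ| < 1) :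
    Tendsto (fun t => A t - B t) atTop (𝓝 0) := by
  refine Tendsto.congr (fun t => (sub_eq_pow_mul_of_recurrence hA hB t).symm) ?_
  simpa using (tendsto_pow_atTop_nhds_zero_of_abs_lt_one hr).mul_const (A 0 - B 0)

end Consensus

theorem stmt_8 (α β γ A₀ B₀ : ℝ) (hab : α + β ≠ 0) (hr : |1 - α * γ - β * γ| < 1)
    (A B : ℕ → ℝ) (hA0 : A 0 = A₀) (hB0 : B 0 = B₀)
    (hA : ∀ t, A (t + 1) = A t * (1 - α * γ) + α * γ * B t)
    (hB : ∀ t, B (t + 1) = B t * (1 - β * γ) + β * γ * A t) :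
    Filter.Tendsto A Filter.atTop (nhds ((β * A₀ + α * B₀) / (α + β))) ∧
    Filter.Tendsto B Filter.atTop (nhds ((β * A₀ + α * B₀) / (α + β))) := by
  subst hA0 hB0
  exact tendsto_of_weighted_sum_eq_of_tendsto_sub hab (weighted_sum_eq_of_recurrence hA hB)
    (tendsto_sub_zero_of_recurrence hA hB hr)
end

section
/- If 1-αγ-βγ = -1 and α + β ≠ 0, then for all even t, M^t is the identity matrix, and for all odd t, M^t = (1/(α+β))·[[β-α, 2α],[2β, α-β]]. -/
/-! The matrix `M` has rows summing to `1`, so its eigenvalues are `1` and `1 - αγ - βγ = -1`;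
hence `M` is an involution and its powers alternate between `1` and `M`. Solving the hypothesis
for `γ = 2 / (α + β)` turns `M` itself into the stated closed form. -/

section SqEqOne

variable {M : Type*} [Monoid M] {x : M}

theorem Even.pow_eq_one_of_sq_eq_one (hx : x ^ 2 = 1) {t : ℕ} (ht : Even t) : x ^ t = 1 := by
  obtain ⟨k, rfl⟩ := ht
  rw [← two_mul, pow_mul, hx, one_pow]

theorem Odd.pow_eq_self_of_sq_eq_one (hx : x ^ 2 = 1) {t : ℕ} (ht : Odd t) : x ^ t = x := by
  obtain ⟨k, rfl⟩ := ht
  rw [pow_succ, pow_mul, hx, one_pow, one_mul]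

end SqEqOne

namespace Matrix

theorem sq_fin_two_one_sub_eq_one {R : Type*} [CommRing R] {a b : R} (hab : a + b = 2) :
    (!![1 - a, a; b, 1 - b] : Matrix (Fin 2) (Fin 2) R) ^ 2 = 1 := by
  rw [sq, mul_fin_two, one_fin_two]
  ext i j
  fin_cases i <;> fin_cases j
  · show (1 - a) * (1 - a) + a * b = 1
    linear_combination a * hab
  · show (1 - a) * a + a * (1 - b) = 0
    linear_combination -a * hab
  · show b * (1 - a) + (1 - b) * b = 0
    linear_combination -b * hab
  · show b * a + (1 - b) * (1 - b) = 1
    linear_combination b * hab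

theorem fin_two_one_sub_eq_inv_smul {K : Type*} [Field K] {α β γ : K} (hαβ : α + β ≠ 0)
    (hγ : α * γ + β * γ = 2) :
    (!![1 - α * γ, α * γ; β * γ, 1 - β * γ] : Matrix (Fin 2) (Fin 2) K) =
      (α + β)⁻¹ • !![β - α, 2 * α; 2 * β, α - β] := by
  obtain rfl : γ = 2 / (α + β) := by
    rw [eq_div_iff hαβ]
    linear_combination hγ
  ext i j
  fin_cases i <;> fin_cases j <;>
    simp only [Fin.zero_eta, Fin.mk_one, Fin.isValue, of_apply, cons_val', cons_val_zero,
      cons_val_one, cons_val_fin_one, smul_apply, smul_eq_mul] <;>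
    field_simp <;> ring

end Matrix

theorem stmt_9 (α β γ : ℝ) (h : 1 - α * γ - β * γ = -1) (hab : α + β ≠ 0) :
    ∀ t : ℕ,
      (Even t → (!![1 - α * γ, α * γ; β * γ, 1 - β * γ] : Matrix (Fin 2) (Fin 2) ℝ) ^ t = 1) ∧
      (Odd t → (!![1 - α * γ, α * γ; β * γ, 1 - β * γ] : Matrix (Fin 2) (Fin 2) ℝ) ^ t =
        (α + β)⁻¹ • !![β - α, 2 * α; 2 * β, α - β]) := by
  have hγ : α * γ + β * γ = 2 := by linarith
  have hsq := Matrix.sq_fin_two_one_sub_eq_one hγ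
  intro t
  exact ⟨fun ht => ht.pow_eq_one_of_sq_eq_one hsq,
    fun ht => (ht.pow_eq_self_of_sq_eq_one hsq).trans (Matrix.fin_two_one_sub_eq_inv_smul hab hγ)⟩
end

section
/- If 1-αγ-βγ = -1 and α + β ≠ 0, then the sequence (A(t), B(t)) oscillates with period 2: (A(t),B(t)) = (A₀,B₀) for even t, and (A(t),B(t)) = (((β-α)A₀ + 2αB₀)/(α+β), ((α-β)B₀ + 2βA₀)/(α+β)) for odd t. -/
/-!
Since `1 - αγ - βγ = -1`, the difference `A - B` changes sign at every step, while `A` moves by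
`-αγ (A - B)` and `B` by `βγ (A - B)`. Over two steps these moves cancel, so both sequences are
`2`-periodic, and the odd values are the values at `t = 1`, rewritten with `γ = 2 / (α + β)`.
-/

open Function

theorem Function.Periodic.nat_eq_zero_of_even {X : Type*} {f : ℕ → X} (hf : Periodic f 2)
    {t : ℕ} (ht : Even t) : f t = f 0 := by
  obtain ⟨k, rfl⟩ := ht
  rw [← two_mul, mul_comm]
  exact hf.nat_mul_eq k

theorem Function.Periodic.nat_eq_one_of_odd {X : Type*} {f : ℕ → X} (hf : Periodic f 2)
    {t : ℕ} (ht : Odd t) : f t = f 1 := by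
  obtain ⟨k, rfl⟩ := ht
  rw [add_comm, mul_comm]
  exact hf.nat_mul k 1

section TwoSpeciesRecurrence

variable {α β γ : ℝ} {A B : ℕ → ℝ} (h : 1 - α * γ - β * γ = -1)
  (hA : ∀ t, A (t + 1) = A t * (1 - α * γ) + α * γ * B t)
  (hB : ∀ t, B (t + 1) = B t * (1 - β * γ) + β * γ * A t)
include h hA hB

theorem antiperiodic_sub_of_step : Antiperiodic (A - B) 1 := fun t => by
  simp only [Pi.sub_apply, hA, hB]
  linear_combination (A t - B t) * h

theorem periodic_fst_of_step : Periodic A 2 := fun t => by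
  have hsub := antiperiodic_sub_of_step h hA hB t
  simp only [Pi.sub_apply] at hsub
  linear_combination hA (t + 1) + hA t - α * γ * hsub

theorem periodic_snd_of_step : Periodic B 2 := fun t => by
  have hsub := antiperiodic_sub_of_step h hA hB t
  simp only [Pi.sub_apply] at hsub
  linear_combination hB (t + 1) + hB t + β * γ * hsub

end TwoSpeciesRecurrence

theorem stmt_10 (α β γ A₀ B₀ : ℝ) (h : 1 - α * γ - β * γ = -1) (hab : α + β ≠ 0)
    (A B : ℕ → ℝ) (hA0 : A 0 = A₀) (hB0 : B 0 = B₀)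
    (hA : ∀ t, A (t + 1) = A t * (1 - α * γ) + α * γ * B t)
    (hB : ∀ t, B (t + 1) = B t * (1 - β * γ) + β * γ * A t) :
    ∀ t : ℕ,
      (Even t → A t = A₀ ∧ B t = B₀) ∧
      (Odd t → A t = ((β - α) * A₀ + 2 * α * B₀) / (α + β) ∧
               B t = ((α - β) * B₀ + 2 * β * A₀) / (α + β)) := by
  intro t
  have hγ : γ * (α + β) = 2 := by linear_combination -h
  have hAper := periodic_fst_of_step h hA hB
  have hBper := periodic_snd_of_step h hA hB
  refine ⟨fun ht => ⟨?_, ?_⟩, fun ht => ⟨?_, ?_⟩⟩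
  · rw [hAper.nat_eq_zero_of_even ht, hA0]
  · rw [hBper.nat_eq_zero_of_even ht, hB0]
  · rw [hAper.nat_eq_one_of_odd ht, hA 0, hA0, hB0, eq_div_iff hab]
    linear_combination α * (B₀ - A₀) * hγ
  · rw [hBper.nat_eq_one_of_odd ht, hB 0, hA0, hB0, eq_div_iff hab]
    linear_combination β * (A₀ - B₀) * hγ
end
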